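/- arXiv:1604.08459 — 2 statements merged into one kernel-verified Lean document; each statement's English description precedes it below -/
import Mathlib

section
/- Let K ≥ 1 and let X_1, …, X_K, Y_1, …, Y_K be 2K mutually independent real random variables, with the X_i identically distributed and the Y_j identically distributed. Let f = (1/K²) · Σ_{1 ≤ i,j ≤ K} 1{X_i < Y_j} be the empirical comparison frequency. Then Var(f) ≤ 1/(2K). In particular, if N = 2K is the total number of evaluations, Var(f) ≤ 1/N. -/
/-!
Write `f = K⁻² ∑_{(i,j)} Z_{ij}` with `Z_{ij} = 1{X_i < Y_j}`, so that
`Var f = K⁻⁴ ∑_{(i,j),(i',j')} cov(Z_{ij}, Z_{i'j'})`. When `i ≠ i'` and `j ≠ j'` the two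
indicators are functions of disjoint families of independent variables, so their covariance
vanishes; otherwise it is at most `1/4`, since `2 cov(U, V) ≤ Var U + Var V` and a `[0,1]`-valued
variable has variance at most `1/4`. Each pair `(i,j)` shares its row with `K` pairs and its
column with `K` pairs, so the double sum is at most `K² · 2K / 4` and `Var f ≤ 1 / (2K)`.
-/

open MeasureTheory ProbabilityTheory

/-- The empirical comparison frequency of two samples `(X i)_{i < K}` and `(Y j)_{j < K}`:
the fraction of pairs `(i,j)` with `X i < Y j`. -/
noncomputable def compFreq {Ω : Type*} (K : ℕ) (X Y : Fin K → Ω → ℝ) (ω : Ω) : ℝ :=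
  (1 / (K : ℝ) ^ 2) * ∑ i : Fin K, ∑ j : Fin K, if X i ω < Y j ω then (1 : ℝ) else 0

noncomputable def ltIndicator {Ω : Type*} (X Y : Ω → ℝ) (ω : Ω) : ℝ :=
  if X ω < Y ω then 1 else 0

lemma ltIndicator_mem_Icc {Ω : Type*} (X Y : Ω → ℝ) (ω : Ω) :
    ltIndicator X Y ω ∈ Set.Icc 0 1 := by
  unfold ltIndicator
  split_ifs <;> norm_num

lemma compFreq_eq_sum_ltIndicator {Ω : Type*} (K : ℕ) (X Y : Fin K → Ω → ℝ) :
    compFreq K X Y =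
      fun ω ↦ 1 / (K : ℝ) ^ 2 * ∑ p : Fin K × Fin K, ltIndicator (X p.1) (Y p.2) ω := by
  funext ω
  rw [compFreq, Fintype.sum_prod_type]
  rfl

lemma sum_sum_ite_fst_eq_add_ite_snd_eq {ι κ : Type*} [Fintype ι] [Fintype κ]
    [DecidableEq ι] [DecidableEq κ] :
    ∑ p : ι × κ, ∑ q : ι × κ, ((if p.1 = q.1 then (1 : ℝ) else 0) + if p.2 = q.2 then 1 else 0) =
      Fintype.card ι * Fintype.card κ * (Fintype.card κ + Fintype.card ι) := by
  have row_add_col (p : ι × κ) :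
      ∑ q : ι × κ, ((if p.1 = q.1 then (1 : ℝ) else 0) + if p.2 = q.2 then 1 else 0) =
        Fintype.card κ + Fintype.card ι := by
    simp only [Finset.sum_add_distrib, Fintype.sum_prod_type]
    rw [Finset.sum_comm (f := fun a b ↦ if p.2 = b then (1 : ℝ) else 0)]
    simp [apply_ite Finset.card]
  simp only [row_add_col, Finset.sum_const, Finset.card_univ, Fintype.card_prod, nsmul_eq_mul]
  push_cast
  ring

section

variable {Ω : Type*} [MeasurableSpace Ω] {μ : Measure Ω}

lemma two_mul_covariance_le_variance_add_variance [IsFiniteMeasure μ] {X Y : Ω → ℝ}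
    (hX : MemLp X 2 μ) (hY : MemLp Y 2 μ) :
    2 * cov[X, Y; μ] ≤ Var[X; μ] + Var[Y; μ] := by
  have h := variance_nonneg (X - Y) μ
  rw [variance_sub hX hY] at h
  linarith

lemma covariance_le_sq_of_bounded [IsProbabilityMeasure μ] {a b : ℝ} {X Y : Ω → ℝ}
    (hX : ∀ᵐ ω ∂μ, X ω ∈ Set.Icc a b) (hY : ∀ᵐ ω ∂μ, Y ω ∈ Set.Icc a b)
    (hXm : AEMeasurable X μ) (hYm : AEMeasurable Y μ) :
    cov[X, Y; μ] ≤ ((b - a) / 2) ^ 2 := by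
  have h := two_mul_covariance_le_variance_add_variance
    (memLp_of_bounded hX hXm.aestronglyMeasurable 2)
    (memLp_of_bounded hY hYm.aestronglyMeasurable 2)
  linarith [variance_le_sq_of_bounded hX hXm, variance_le_sq_of_bounded hY hYm]

lemma variance_sum_prod_le_of_indepFun [IsProbabilityMeasure μ] {ι κ : Type*}
    [Fintype ι] [Fintype κ] {Z : ι × κ → Ω → ℝ}
    (hZ : ∀ p, ∀ᵐ ω ∂μ, Z p ω ∈ Set.Icc 0 1) (hZm : ∀ p, AEMeasurable (Z p) μ)
    (hindep : ∀ p q, p.1 ≠ q.1 → p.2 ≠ q.2 → IndepFun (Z p) (Z q) μ) :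
    Var[fun ω ↦ ∑ p, Z p ω; μ] ≤
      Fintype.card ι * Fintype.card κ * (Fintype.card κ + Fintype.card ι) / 4 := by
  classical
  have hL2 p : MemLp (Z p) 2 μ := memLp_of_bounded (hZ p) (hZm p).aestronglyMeasurable 2
  have hcov p q : cov[Z p, Z q; μ] ≤
      ((if p.1 = q.1 then (1 : ℝ) else 0) + if p.2 = q.2 then 1 else 0) / 4 := by
    by_cases h : p.1 ≠ q.1 ∧ p.2 ≠ q.2
    · simp [(hindep p q h.1 h.2).covariance_eq_zero (hL2 p) (hL2 q), h.1, h.2]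
    · have hle := covariance_le_sq_of_bounded (hZ p) (hZ q) (hZm p) (hZm q)
      rw [not_and_or, not_not, not_not] at h
      rcases h with h | h <;> split_ifs <;> norm_num at hle ⊢ <;> linarith
  rw [variance_fun_sum hL2, ← sum_sum_ite_fst_eq_add_ite_snd_eq, Finset.sum_div]
  gcongr with p
  rw [Finset.sum_div]
  gcongr with q
  exact hcov p q

lemma Measurable.ltIndicator {X Y : Ω → ℝ} (hX : Measurable X) (hY : Measurable Y) :
    Measurable (ltIndicator X Y) :=
  Measurable.ite (measurableSet_lt hX hY) measurable_const measurable_const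

lemma ProbabilityTheory.iIndepFun.indepFun_ltIndicator {ι κ : Type*} {X : ι → Ω → ℝ}
    {Y : κ → Ω → ℝ} (hindep : iIndepFun (Sum.elim X Y) μ) (hX : ∀ i, Measurable (X i))
    (hY : ∀ j, Measurable (Y j)) {i i' : ι} {j j' : κ} (hi : i ≠ i') (hj : j ≠ j') :
    IndepFun (ltIndicator (X i) (Y j)) (ltIndicator (X i') (Y j')) μ := by
  have hmeas : ∀ k, Measurable (Sum.elim X Y k) := by
    rintro (k | k)
    exacts [hX k, hY k]
  have hlt : Measurable (ltIndicator (Prod.fst : ℝ × ℝ → ℝ) Prod.snd) :=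
    measurable_fst.ltIndicator measurable_snd
  exact (hindep.indepFun_prodMk_prodMk hmeas (.inl i) (.inr j) (.inl i') (.inr j')
    (by simpa using hi) (by simp) (by simp) (by simpa using hj)).comp hlt hlt

end

theorem variance_comparison_frequency_general
    {Ω : Type*} [MeasurableSpace Ω] (μ : Measure Ω) [IsProbabilityMeasure μ]
    (K : ℕ) (X Y : Fin K → Ω → ℝ)
    (hXmeas : ∀ i, Measurable (X i)) (hYmeas : ∀ j, Measurable (Y j))
    (hindep : iIndepFun (Sum.elim X Y : Fin K ⊕ Fin K → Ω → ℝ) μ) :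
    variance (compFreq K X Y) μ ≤ 1 / (2 * K) := by
  have hsum := variance_sum_prod_le_of_indepFun (μ := μ)
    (Z := fun p : Fin K × Fin K ↦ ltIndicator (X p.1) (Y p.2))
    (fun p ↦ ae_of_all μ (ltIndicator_mem_Icc _ _))
    (fun p ↦ ((hXmeas p.1).ltIndicator (hYmeas p.2)).aemeasurable)
    (fun p q hi hj ↦ hindep.indepFun_ltIndicator hXmeas hYmeas hi hj)
  rw [compFreq_eq_sum_ltIndicator, variance_const_mul]
  simp only [Fintype.card_fin] at hsum
  calc _ ≤ (1 / (K : ℝ) ^ 2) ^ 2 * ((K : ℝ) * K * (K + K) / 4) :=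
        mul_le_mul_of_nonneg_left hsum (by positivity)
    _ = 1 / (2 * K) := by
        rcases eq_or_ne (K : ℝ) 0 with hK | hK
        · simp [hK] -- both sides are `0`, as `x / 0 = 0`
        · field_simp
          ring

/-- If `X_1, …, X_K, Y_1, …, Y_K` are mutually independent, the `X_i` identically
distributed and the `Y_j` identically distributed, then the variance of the empirical
comparison frequency `f = (1/K²)·Σ_{i,j} 1{X_i < Y_j}` is at most `1/(2K)`; in particular,
with `N = 2K` the total number of evaluations, `Var(f) ≤ 1/N`. -/
theorem variance_comparison_frequency
    {Ω : Type*} [MeasurableSpace Ω] (μ : Measure Ω) [IsProbabilityMeasure μ]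
    (K : ℕ) (hK : 1 ≤ K) (X Y : Fin K → Ω → ℝ)
    (hXmeas : ∀ i, Measurable (X i)) (hYmeas : ∀ j, Measurable (Y j))
    (hindep : iIndepFun (Sum.elim X Y : Fin K ⊕ Fin K → Ω → ℝ) μ)
    (hXid : ∀ i, IdentDistrib (X i) (X ⟨0, hK⟩) μ μ)
    (hYid : ∀ j, IdentDistrib (Y j) (Y ⟨0, hK⟩) μ μ) :
    variance (compFreq K X Y) μ ≤ 1 / (2 * K) :=
  variance_comparison_frequency_general μ K X Y hXmeas hYmeas hindep
end

section
/- There exists a universal constant C > 0 with the following property (simple regret of the COPS1 algorithm). Let x* ∈ [−1,1], let K ≥ 1, and let G_1, …, G_K, G'_1, …, G'_K be 2K independent standard Gaussian random variables. Set f = (1/K²) · Σ_{1 ≤ i,j ≤ K} 1{(1 − x*)² + G_i < (−1 − x*)² + G'_j}, and define the estimator x̂ = max(−1, min(1, h(f)/√8)), where h is the clamped inverse of Φ on [−√8, √8] (h(x) = Φ⁻¹(x) for x ∈ [Φ(−√8), Φ(√8)], constant equal to ∓√8 outside). Then the simple regret after N = 2K evaluations of the noisy sphere F_noisy(x) = (x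 − x*)² + N(0,1) satisfies E[(x̂ − x*)²] ≤ C/N. -/
/-!
The comparison indicators `1{(1 - x*)² + Gᵢ < (-1 - x*)² + G'ⱼ}` all have mean
`p = Φ(√8 x*)`, because `Gᵢ - G'ⱼ ~ N(0, 2)`. Their average `f` is a two-sample U-statistic: two
indicators with disjoint index pairs are independent, so only `O(K³)` of the `K⁴` covariances
survive and `E[(f - p)²] = O(1/K)`. On `[-√8, √8]` the density of `Φ` is at least `φ(√8)`, so the
clamped inverse `h` is `1/φ(√8)`-Lipschitz towards `√8 x*`, and clamping to `[-1, 1]` only brings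
`x̂` closer to `x*`. Hence `(x̂ - x*)² ≤ (f - p)² / (8 φ(√8)²)` pointwise, and taking expectations
gives the `C/N` bound.
-/

open MeasureTheory ProbabilityTheory

universe u

noncomputable def stdGaussCDF : ℝ → ℝ := fun t => ProbabilityTheory.cdf (gaussianReal 0 1) t

/-- `h` is the clamped inverse of the standard Gaussian CDF `Φ` on `[−c, c]`. -/
def IsClampedGaussInv (c : ℝ) (h : ℝ → ℝ) : Prop :=
  (∀ t ∈ Set.Icc (-c) c, h (stdGaussCDF t) = t) ∧
  (∀ x, x < stdGaussCDF (-c) → h x = -c) ∧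
  (∀ x, stdGaussCDF c < x → h x = c)

open Real Set

lemma stdGaussCDF_eq_integral (t : ℝ) :
    stdGaussCDF t = ∫ u in Iic t, gaussianPDFReal 0 1 u := by
  rw [stdGaussCDF, cdf_eq_real, measureReal_def, gaussianReal_apply_eq_integral 0 one_ne_zero,
    ENNReal.toReal_ofReal (setIntegral_nonneg measurableSet_Iic fun x _ ↦
      gaussianPDFReal_nonneg 0 1 x)]

lemma hasDerivAt_stdGaussCDF (t : ℝ) :
    HasDerivAt stdGaussCDF (gaussianPDFReal 0 1 t) t := by
  have hφ : Continuous (gaussianPDFReal 0 1) := by unfold gaussianPDFReal; fun_prop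
  have hint : ∀ a, IntegrableOn (gaussianPDFReal 0 1) (Iic a) :=
    fun _ ↦ (integrable_gaussianPDFReal 0 1).integrableOn
  have hprim : stdGaussCDF = fun u ↦ stdGaussCDF 0 + ∫ x in (0 : ℝ)..u, gaussianPDFReal 0 1 x := by
    ext u
    rw [← intervalIntegral.integral_Iic_sub_Iic (hint 0) (hint u), stdGaussCDF_eq_integral,
      stdGaussCDF_eq_integral]
    ring
  rw [hprim]
  exact ((hφ.integral_hasStrictDerivAt 0 t).hasDerivAt).const_add _

lemma continuous_stdGaussCDF : Continuous stdGaussCDF :=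
  continuous_iff_continuousAt.2 fun t ↦ (hasDerivAt_stdGaussCDF t).continuousAt

lemma monotone_stdGaussCDF : Monotone stdGaussCDF :=
  (cdf (gaussianReal 0 1)).mono

lemma gaussianPDFReal_le_of_abs_le {x y : ℝ} (h : |x| ≤ |y|) :
    gaussianPDFReal 0 1 y ≤ gaussianPDFReal 0 1 x := by
  have hsq : x ^ 2 ≤ y ^ 2 := sq_le_sq.2 h
  simp only [gaussianPDFReal, sub_zero, NNReal.coe_one]
  gcongr

lemma mul_abs_sub_le_abs_stdGaussCDF_sub {c s t : ℝ} (hs : s ∈ Icc (-c) c) (ht : t ∈ Icc (-c) c) :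
    gaussianPDFReal 0 1 c * |t - s| ≤ |stdGaussCDF t - stdGaussCDF s| := by
  have key := (convex_Icc (-c) c).mul_sub_le_image_sub_of_le_deriv
    continuous_stdGaussCDF.continuousOn
    (fun u _ ↦ (hasDerivAt_stdGaussCDF u).differentiableAt.differentiableWithinAt)
    (C := gaussianPDFReal 0 1 c) fun u hu ↦ by
      rw [interior_Icc] at hu
      rw [(hasDerivAt_stdGaussCDF u).deriv]
      exact gaussianPDFReal_le_of_abs_le ((abs_le.2 ⟨hu.1.le, hu.2.le⟩).trans (le_abs_self c))
  rcases le_total s t with hst | hts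
  · rw [abs_of_nonneg (sub_nonneg.2 hst), abs_of_nonneg (sub_nonneg.2 (monotone_stdGaussCDF hst))]
    exact key s hs t ht hst
  · rw [abs_sub_comm, abs_sub_comm (stdGaussCDF t), abs_of_nonneg (sub_nonneg.2 hts),
      abs_of_nonneg (sub_nonneg.2 (monotone_stdGaussCDF hts))]
    exact key t ht s hs hts

namespace IsClampedGaussInv

variable {c : ℝ} {h : ℝ → ℝ}

lemma mem_Icc_and_abs_stdGaussCDF_sub_le (hh : IsClampedGaussInv c h) (hc : 0 ≤ c)
    {s : ℝ} (hs : s ∈ Icc (-c) c) (x : ℝ) :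
    h x ∈ Icc (-c) c ∧ |stdGaussCDF (h x) - stdGaussCDF s| ≤ |x - stdGaussCDF s| := by
  obtain ⟨hmid, hlo, hhi⟩ := hh
  rcases lt_or_ge x (stdGaussCDF (-c)) with hx | hx
  · rw [hlo x hx]
    have := monotone_stdGaussCDF hs.1
    refine ⟨left_mem_Icc.2 (by linarith), ?_⟩
    rw [abs_sub_comm, abs_sub_comm x, abs_of_nonneg (by linarith), abs_of_nonneg (by linarith)]
    linarith
  rcases lt_or_ge (stdGaussCDF c) x with hx' | hx'
  · rw [hhi x hx']
    have := monotone_stdGaussCDF hs.2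
    refine ⟨right_mem_Icc.2 (by linarith), ?_⟩
    rw [abs_of_nonneg (by linarith), abs_of_nonneg (by linarith)]
    linarith
  obtain ⟨t, ht, rfl⟩ := intermediate_value_Icc (by linarith) continuous_stdGaussCDF.continuousOn
    ⟨hx, hx'⟩
  rw [hmid t ht]
  exact ⟨ht, le_rfl⟩

lemma abs_sub_le (hh : IsClampedGaussInv c h) (hc : 0 ≤ c) {s : ℝ} (hs : s ∈ Icc (-c) c)
    (x : ℝ) : |h x - s| ≤ |x - stdGaussCDF s| / gaussianPDFReal 0 1 c := by
  obtain ⟨hmem, hle⟩ := hh.mem_Icc_and_abs_stdGaussCDF_sub_le hc hs x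
  rw [le_div_iff₀ (gaussianPDFReal_pos 0 1 c one_ne_zero), mul_comm]
  exact (mul_abs_sub_le_abs_stdGaussCDF_sub hs hmem).trans hle

lemma sq_clamp_div_sub_le (hh : IsClampedGaussInv c h) (hc : 0 < c) {a : ℝ}
    (ha : a ∈ Icc (-1) 1) (x : ℝ) :
    (max (-1) (min 1 (h x / c)) - a) ^ 2 ≤
      (x - stdGaussCDF (c * a)) ^ 2 / (c * gaussianPDFReal 0 1 c) ^ 2 := by
  have hca : c * a ∈ Icc (-c) c := ⟨by nlinarith [ha.1], by nlinarith [ha.2]⟩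
  have hclamp : |max (-1) (min 1 (h x / c)) - a| ≤ |h x / c - a| := by
    conv_lhs => rw [← min_eq_right ha.2, ← max_eq_right (le_min (by norm_num) ha.1)]
    refine (abs_max_sub_max_le_max _ _ _ _).trans (max_le (by simp) ?_)
    exact (abs_min_sub_min_le_max _ _ _ _).trans (max_le (by simp) le_rfl)
  have hinv := hh.abs_sub_le hc.le hca x
  have hφ := gaussianPDFReal_pos 0 1 c one_ne_zero
  rw [← sq_abs, ← sq_abs (x - _), ← div_pow]
  gcongr
  calc |max (-1) (min 1 (h x / c)) - a| ≤ |h x / c - a| := hclamp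
    _ = |h x - c * a| / c := by
      rw [eq_div_iff hc.ne', ← abs_of_pos hc, ← abs_mul, abs_of_pos hc, sub_mul,
        div_mul_cancel₀ _ hc.ne', mul_comm]
    _ ≤ |x - stdGaussCDF (c * a)| / gaussianPDFReal 0 1 c / c := by gcongr
    _ = _ := by rw [div_div, mul_comm (gaussianPDFReal 0 1 c)]

end IsClampedGaussInv

lemma measureReal_sub_lt_eq_stdGaussCDF {Ω : Type*} [MeasurableSpace Ω] {μ : Measure Ω}
    [IsProbabilityMeasure μ] {X Y : Ω → ℝ} (hX : HasLaw X (gaussianReal 0 1) μ)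
    (hY : HasLaw Y (gaussianReal 0 1) μ) (hXY : IndepFun X Y μ) (t : ℝ) :
    μ.real {ω | X ω - Y ω < t} = stdGaussCDF (t / √2) := by
  have hsum : HasLaw (X + -Y) (gaussianReal 0 2) μ := by
    have hXnY : IndepFun X (-Y) μ := hXY.comp measurable_id measurable_neg
    refine ⟨by fun_prop, ?_⟩
    rw [gaussianReal_add_gaussianReal_of_indepFun hXnY hX.map_eq (gaussianReal_neg hY).map_eq]
    norm_num
  have hnorm : HasLaw (fun ω ↦ (X - Y) ω / √2) (gaussianReal 0 1) μ := by
    convert gaussianReal_div_const hsum √2 using 2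
    · simp [sub_eq_add_neg]
    · simp
    · rw [← NNReal.coe_inj]; simp
  have hset : {ω | X ω - Y ω < t} = {ω | (X - Y) ω / √2 < t / √2} := by
    ext ω
    simp [div_lt_div_iff_of_pos_right (by positivity : (0 : ℝ) < √2)]
  have hatom : (gaussianReal 0 1) {t / √2} = 0 :=
    gaussianReal_absolutelyContinuous 0 one_ne_zero (measure_singleton _)
  rw [hset, hnorm.measureReal_eq (p := (· < t / √2)) measurableSet_Iio, stdGaussCDF, cdf_eq_real,
    measureReal_def, measureReal_def, ← measure_congr (Iio_ae_eq_Iic' hatom)]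
  rfl

section UStatistic

open Finset Fintype

variable {Ω ι κ : Type*} [MeasurableSpace Ω] {μ : Measure Ω} [IsProbabilityMeasure μ]
  [Fintype ι] [Fintype κ]

/-- Only pairs of index pairs sharing a coordinate can be correlated, and there are at most
`|ι| |κ| (|ι| + |κ|)` of them. -/
lemma integral_sq_sum_sum_le_of_indepFun {Y : ι → κ → Ω → ℝ}
    (hm : ∀ i j, AEStronglyMeasurable (Y i j) μ) (hbdd : ∀ i j ω, |Y i j ω| ≤ 1)
    (hmean : ∀ i j, ∫ ω, Y i j ω ∂μ = 0)
    (hind : ∀ i j k l, i ≠ k → j ≠ l → IndepFun (Y i j) (Y k l) μ) :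
    ∫ ω, (∑ i, ∑ j, Y i j ω) ^ 2 ∂μ ≤ card ι * card κ * (card ι + card κ) := by
  classical
  have hprod_bdd : ∀ (q r : ι × κ) ω, |Y q.1 q.2 ω * Y r.1 r.2 ω| ≤ 1 := fun q r ω ↦ by
    rw [abs_mul]
    exact mul_le_one₀ (hbdd _ _ ω) (abs_nonneg _) (hbdd _ _ ω)
  have hprod_int : ∀ q r : ι × κ, Integrable (fun ω ↦ Y q.1 q.2 ω * Y r.1 r.2 ω) μ :=
    fun q r ↦ Integrable.of_bound ((hm _ _).mul (hm _ _)) 1 (ae_of_all _ (hprod_bdd q r))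
  have hcov : ∀ q r : ι × κ, ∫ ω, Y q.1 q.2 ω * Y r.1 r.2 ω ∂μ ≤
      (if q.1 = r.1 then 1 else 0) + (if q.2 = r.2 then 1 else 0) := by
    intro q r
    by_cases h : q.1 = r.1 ∨ q.2 = r.2
    · have hle : ∫ ω, Y q.1 q.2 ω * Y r.1 r.2 ω ∂μ ≤ 1 := by
        refine (integral_mono (hprod_int q r) (integrable_const 1) fun ω ↦ ?_).trans_eq
          (by simp)
        exact (le_abs_self _).trans (hprod_bdd q r ω)
      rcases h with h | h <;> split_ifs <;> linarith
    · rw [not_or] at h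
      have := (hind _ _ _ _ h.1 h.2).integral_mul_eq_mul_integral (hm _ _) (hm _ _)
      simp only [Pi.mul_apply] at this
      rw [this, hmean, zero_mul, if_neg h.1, if_neg h.2, add_zero]
  have hexpand : ∀ ω, (∑ i, ∑ j, Y i j ω) ^ 2 =
      ∑ q : ι × κ, ∑ r : ι × κ, Y q.1 q.2 ω * Y r.1 r.2 ω := by
    intro ω
    rw [← Fintype.sum_prod_type', sq, Finset.sum_mul_sum]
  have hcount : ∀ q : ι × κ, ∑ r : ι × κ,
      ((if q.1 = r.1 then (1 : ℝ) else 0) + (if q.2 = r.2 then 1 else 0)) =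
        card κ + card ι := by
    intro q
    rw [Fintype.sum_prod_type]
    simp [Finset.sum_add_distrib, apply_ite Finset.card]
  calc ∫ ω, (∑ i, ∑ j, Y i j ω) ^ 2 ∂μ
      = ∑ q : ι × κ, ∑ r : ι × κ, ∫ ω, Y q.1 q.2 ω * Y r.1 r.2 ω ∂μ := by
        simp_rw [hexpand]
        rw [integral_finsetSum _ fun q _ ↦ integrable_finsetSum _ fun r _ ↦ hprod_int q r]
        exact sum_congr rfl fun q _ ↦ integral_finsetSum _ fun r _ ↦ hprod_int q r
    _ ≤ ∑ q : ι × κ, ∑ r : ι × κ,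
        ((if q.1 = r.1 then (1 : ℝ) else 0) + (if q.2 = r.2 then 1 else 0)) :=
        sum_le_sum fun q _ ↦ sum_le_sum fun r _ ↦ hcov q r
    _ = card ι * card κ * (card ι + card κ) := by
        simp only [hcount, sum_const, card_univ, card_prod, nsmul_eq_mul]
        push_cast
        ring

end UStatistic

lemma measurable_ite_add_lt_add {Ω : Type*} [MeasurableSpace Ω] {X Y : Ω → ℝ}
    (hX : Measurable X) (hY : Measurable Y) (a b : ℝ) :
    Measurable fun ω ↦ if a + X ω < b + Y ω then (1 : ℝ) else 0 :=
  Measurable.ite (measurableSet_lt (hX.const_add a) (hY.const_add b)) measurable_const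
    measurable_const

lemma integral_ite_add_lt_add_eq_stdGaussCDF {Ω : Type*} [MeasurableSpace Ω] {μ : Measure Ω}
    [IsProbabilityMeasure μ] {X Y : Ω → ℝ} (hXm : Measurable X) (hYm : Measurable Y)
    (hX : μ.map X = gaussianReal 0 1) (hY : μ.map Y = gaussianReal 0 1) (hXY : IndepFun X Y μ)
    (a b : ℝ) :
    ∫ ω, (if a + X ω < b + Y ω then (1 : ℝ) else 0) ∂μ = stdGaussCDF ((b - a) / √2) := by
  have hset : {ω | a + X ω < b + Y ω} = {ω | X ω - Y ω < b - a} := by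
    ext ω
    simp only [Set.mem_ofPred_eq]
    constructor <;> intro h <;> linarith
  have hmeas : MeasurableSet {ω | a + X ω < b + Y ω} :=
    measurableSet_lt (hXm.const_add a) (hYm.const_add b)
  rw [← measureReal_sub_lt_eq_stdGaussCDF ⟨hXm.aemeasurable, hX⟩ ⟨hYm.aemeasurable, hY⟩ hXY,
    ← hset, ← integral_indicator_one hmeas]
  rfl

section ComparisonFrequency

open Finset Fintype

variable {Ω ι κ : Type*} [Fintype ι] [Fintype κ]

/-- The statistic `f` of COPS1 is `comparisonFrequency G G' (1 - x*)² (-1 - x*)²`. -/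
noncomputable def comparisonFrequency (G : ι → Ω → ℝ) (G' : κ → Ω → ℝ) (a b : ℝ) (ω : Ω) : ℝ :=
  1 / ((card ι : ℝ) * card κ) * ∑ i, ∑ j, if a + G i ω < b + G' j ω then 1 else 0

lemma comparisonFrequency_mem_Icc (G : ι → Ω → ℝ) (G' : κ → Ω → ℝ) (a b : ℝ) (ω : Ω) :
    comparisonFrequency G G' a b ω ∈ Set.Icc 0 1 := by
  have hsum : ∑ i, ∑ j, (if a + G i ω < b + G' j ω then (1 : ℝ) else 0) ≤ card ι * card κ := by
    calc _ ≤ ∑ _i : ι, ∑ _j : κ, (1 : ℝ) := by gcongr; split_ifs <;> norm_num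
      _ = card ι * card κ := by simp
  rw [comparisonFrequency, one_div_mul_eq_div]
  exact ⟨by positivity, div_le_one_of_le₀ hsum (by positivity)⟩

variable [MeasurableSpace Ω]

lemma measurable_comparisonFrequency {G : ι → Ω → ℝ} {G' : κ → Ω → ℝ}
    (hGm : ∀ i, Measurable (G i)) (hG'm : ∀ j, Measurable (G' j)) (a b : ℝ) :
    Measurable (comparisonFrequency G G' a b) :=
  measurable_const.mul <| Finset.measurable_sum _ fun i _ ↦ Finset.measurable_sum _ fun j _ ↦
    measurable_ite_add_lt_add (hGm i) (hG'm j) a b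

variable {μ : Measure Ω} [IsProbabilityMeasure μ]

lemma integral_sq_comparisonFrequency_sub_le [Nonempty ι] [Nonempty κ]
    {G : ι → Ω → ℝ} {G' : κ → Ω → ℝ} (hGm : ∀ i, Measurable (G i))
    (hG'm : ∀ j, Measurable (G' j)) (hG : ∀ i, μ.map (G i) = gaussianReal 0 1)
    (hG' : ∀ j, μ.map (G' j) = gaussianReal 0 1) (hindep : iIndepFun (Sum.elim G G') μ)
    (a b : ℝ) :
    ∫ ω, (comparisonFrequency G G' a b ω - stdGaussCDF ((b - a) / √2)) ^ 2 ∂μ ≤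
      ((card ι : ℝ) + card κ) / (card ι * card κ) := by
  set p := stdGaussCDF ((b - a) / √2)
  set ψ : ℝ × ℝ → ℝ := fun z ↦ (if a + z.1 < b + z.2 then (1 : ℝ) else 0) - p
  have hψ : Measurable ψ :=
    (measurable_ite_add_lt_add measurable_fst measurable_snd a b).sub_const p
  set Y : ι → κ → Ω → ℝ := fun i j ω ↦ ψ (G i ω, G' j ω)
  have hm : ∀ i, Measurable (Sum.elim G G' i) := by
    rintro (i | j)
    exacts [hGm i, hG'm j]
  have hYm : ∀ i j, AEStronglyMeasurable (Y i j) μ := fun i j ↦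
    (hψ.comp ((hGm i).prodMk (hG'm j))).aestronglyMeasurable
  have hp : p ∈ Set.Icc 0 1 := ⟨cdf_nonneg _ _, cdf_le_one _ _⟩
  have hYbdd : ∀ i j ω, |Y i j ω| ≤ 1 := by
    intro i j ω
    simp only [Y, ψ]
    split_ifs <;> rw [abs_le] <;> constructor <;> linarith [hp.1, hp.2]
  have hYmean : ∀ i j, ∫ ω, Y i j ω ∂μ = 0 := by
    intro i j
    have hind : IndepFun (G i) (G' j) μ := hindep.indepFun (i := .inl i) (j := .inr j) (by simp)
    have hint : Integrable (fun ω ↦ if a + G i ω < b + G' j ω then (1 : ℝ) else 0) μ :=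
      .of_bound (measurable_ite_add_lt_add (hGm i) (hG'm j) a b).aestronglyMeasurable 1
        (ae_of_all _ fun ω ↦ by split_ifs <;> simp)
    simp only [Y, ψ]
    rw [integral_sub hint (integrable_const p), integral_ite_add_lt_add_eq_stdGaussCDF (hGm i)
      (hG'm j) (hG i) (hG' j) hind]
    simp [p]
  have hYind : ∀ i j k l, i ≠ k → j ≠ l → IndepFun (Y i j) (Y k l) μ :=
    fun i j k l hik hjl ↦ (hindep.indepFun_prodMk_prodMk hm (.inl i) (.inr j) (.inl k) (.inr l)
      (by simpa using hik) (by simp) (by simp) (by simpa using hjl)).comp hψ hψ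
  have hfreq : ∀ ω, comparisonFrequency G G' a b ω - p =
      1 / ((card ι : ℝ) * card κ) * ∑ i, ∑ j, Y i j ω := by
    intro ω
    simp only [comparisonFrequency, Y, ψ, sum_sub_distrib, sum_const, card_univ, nsmul_eq_mul]
    field_simp
  simp_rw [hfreq, mul_pow]
  rw [integral_const_mul]
  calc (1 / ((card ι : ℝ) * card κ)) ^ 2 * ∫ ω, (∑ i, ∑ j, Y i j ω) ^ 2 ∂μ
      ≤ (1 / ((card ι : ℝ) * card κ)) ^ 2 * (card ι * card κ * (card ι + card κ : ℝ)) := by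
        gcongr
        exact integral_sq_sum_sum_le_of_indepFun hYm hYbdd hYmean hYind
    _ = ((card ι : ℝ) + card κ) / (card ι * card κ) := by field_simp

end ComparisonFrequency

lemma IsClampedGaussInv.integral_sq_clamp_div_sub_le {Ω : Type*} [MeasurableSpace Ω]
    {μ : Measure Ω} [IsProbabilityMeasure μ] {c : ℝ} {h : ℝ → ℝ} (hh : IsClampedGaussInv c h)
    (hc : 0 < c) {a : ℝ} (ha : a ∈ Icc (-1) 1) {f : Ω → ℝ} (hfm : Measurable f)
    (hf : ∀ ω, f ω ∈ Icc 0 1) :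
    ∫ ω, (max (-1) (min 1 (h (f ω) / c)) - a) ^ 2 ∂μ ≤
      (∫ ω, (f ω - stdGaussCDF (c * a)) ^ 2 ∂μ) / (c * gaussianPDFReal 0 1 c) ^ 2 := by
  set p := stdGaussCDF (c * a)
  have hp : p ∈ Icc 0 1 := ⟨cdf_nonneg _ _, cdf_le_one _ _⟩
  have hint : Integrable (fun ω ↦ (f ω - p) ^ 2) μ := by
    refine .of_bound ((hfm.sub_const p).pow_const 2).aestronglyMeasurable 1
      (ae_of_all _ fun ω ↦ ?_)
    rw [Real.norm_of_nonneg (sq_nonneg _), sq_le_one_iff_abs_le_one, abs_sub_le_iff]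
    constructor <;> linarith [(hf ω).1, (hf ω).2, hp.1, hp.2]
  rw [← integral_div]
  exact integral_mono_of_nonneg (ae_of_all _ fun _ ↦ sq_nonneg _) (hint.div_const _)
    (ae_of_all _ fun ω ↦ hh.sq_clamp_div_sub_le hc ha (f ω))

/-- Simple regret of the COPS1 algorithm on the one-dimensional noisy sphere: there is a
universal constant `C > 0` such that for every `x* ∈ [−1,1]` and budget `N = 2K`, the
estimator `x̂ = max(−1, min(1, h(f)/√8))` built from the empirical comparison frequency
`f = (1/K²)·Σ_{i,j} 1{(1−x*)² + G_i < (−1−x*)² + G'_j}` (with `2K` independent standard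
Gaussian noise variables) satisfies `E[(x̂ − x*)²] ≤ C/N`. -/
theorem cops1_simple_regret :
    ∃ C : ℝ, 0 < C ∧
      ∀ (Ω : Type u) [MeasurableSpace Ω] (μ : Measure Ω) [IsProbabilityMeasure μ]
        (xstar : ℝ), xstar ∈ Set.Icc (-1 : ℝ) 1 →
      ∀ (K : ℕ), 1 ≤ K →
      ∀ (G G' : Fin K → Ω → ℝ),
        (∀ i, Measurable (G i)) → (∀ j, Measurable (G' j)) →
        (∀ i, Measure.map (G i) μ = gaussianReal 0 1) →
        (∀ j, Measure.map (G' j) μ = gaussianReal 0 1) →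
        iIndepFun (Sum.elim G G') μ →
      ∀ (h : ℝ → ℝ), IsClampedGaussInv (Real.sqrt 8) h →
        ∫ ω, (max (-1) (min 1
            (h ((1 / (K : ℝ) ^ 2) * ∑ i : Fin K, ∑ j : Fin K,
                if (1 - xstar) ^ 2 + G i ω < (-1 - xstar) ^ 2 + G' j ω then (1 : ℝ) else 0)
              / Real.sqrt 8)) - xstar) ^ 2 ∂μ
          ≤ C / (2 * K) := by
  set κ := √8 * gaussianPDFReal 0 1 √8
  have hκ : 0 < κ := mul_pos (by positivity) (gaussianPDFReal_pos 0 1 _ one_ne_zero)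
  refine ⟨4 / κ ^ 2, by positivity, ?_⟩
  intro Ω _ μ _ xstar hx K hK G G' hGm hG'm hG hG' hindep h hh
  have : Nonempty (Fin K) := ⟨⟨0, hK⟩⟩
  set a := (1 - xstar) ^ 2
  set b := (-1 - xstar) ^ 2
  have hfreq : ∀ ω, (1 / (K : ℝ) ^ 2) * ∑ i : Fin K, ∑ j : Fin K,
      (if a + G i ω < b + G' j ω then (1 : ℝ) else 0) = comparisonFrequency G G' a b ω := by
    simp [comparisonFrequency, sq]
  have hp : stdGaussCDF ((b - a) / √2) = stdGaussCDF (√8 * xstar) := by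
    have h8 : √8 = 4 / √2 := by
      rw [eq_div_iff (by positivity), ← Real.sqrt_mul (by norm_num)]
      norm_num
    rw [h8]
    congr 1
    ring
  have hmse := integral_sq_comparisonFrequency_sub_le hGm hG'm hG hG' hindep a b
  rw [hp, Fintype.card_fin] at hmse
  simp_rw [hfreq]
  calc _ ≤ (∫ ω, (comparisonFrequency G G' a b ω - stdGaussCDF (√8 * xstar)) ^ 2 ∂μ) / κ ^ 2 :=
        hh.integral_sq_clamp_div_sub_le (by positivity) hx
          (measurable_comparisonFrequency hGm hG'm a b) (comparisonFrequency_mem_Icc G G' a b)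
    _ ≤ ((K : ℝ) + K) / (K * K) / κ ^ 2 := by gcongr
    _ = 4 / κ ^ 2 / (2 * K) := by
        field_simp
        ring
end
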